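/- arXiv:1401.6273 — 4 statements merged into one kernel-verified Lean document; each statement's English description precedes it below -/
import Mathlib

section
/- Let g and f₁,...,fₙ be real-rooted polynomials with positive leading coefficients, and let F = f₁ + f₂ + ⋯ + fₙ. If fᵢ ⪯ g for each i, then F is real-rooted and F ⪯ g. Dually, if g ⪯ fᵢ for each i, then F is real-rooted and g ⪯ F. -/
open Polynomial

/-- `f` has only real zeros (every complex zero is real). -/
def RealRooted (f : Polynomial ℝ) : Prop :=
  ∀ z : ℂ, z ∈ (f.map (algebraMap ℝ ℂ)).roots → z.im = 0

/-- all zeros of `f` are real (counted with multiplicity). -/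
def AllRealRoots (f : Polynomial ℝ) : Prop :=
  f.roots.card = f.natDegree

/-- two polynomials are compatible if every nonnegative linear combination
has only real zeros. -/
def Compatible (f g : Polynomial ℝ) : Prop :=
  ∀ c d : ℝ, 0 ≤ c → 0 ≤ d → RealRooted (C c * f + C d * g)

/-- `Interlaces g f` means `g ⪯ f`: both are real-rooted with positive leading
coefficients, and listing the zeros in decreasing order `u` (of `f`) and `v`
(of `g`), either `deg f = deg g` and `vₙ ≤ uₙ ≤ ⋯ ≤ v₁ ≤ u₁`, or
`deg f = deg g + 1` and `uₙ ≤ vₙ₋₁ ≤ ⋯ ≤ v₁ ≤ u₁`. -/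
def Interlaces (g f : Polynomial ℝ) : Prop :=
  0 < f.leadingCoeff ∧ 0 < g.leadingCoeff ∧
  ∃ u v : List ℝ,
    u.Pairwise (· ≥ ·) ∧ v.Pairwise (· ≥ ·) ∧
    f.roots = (u : Multiset ℝ) ∧ g.roots = (v : Multiset ℝ) ∧
    u.length = f.natDegree ∧ v.length = g.natDegree ∧
    (u.length = v.length ∨ u.length = v.length + 1) ∧
    (∀ (i : ℕ) (hv : i < v.length) (hu : i < u.length),
      v.get ⟨i, hv⟩ ≤ u.get ⟨i, hu⟩) ∧
    (∀ (i : ℕ) (hu : i + 1 < u.length) (hv : i < v.length),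
      u.get ⟨i + 1, hu⟩ ≤ v.get ⟨i, hv⟩)

/-!
Interlacing is recast as a counting condition on multisets: `W ⪯ U` iff every upper set contains
at least as many points of `U` as of `W`, and at most one more. A zero of multiplicity `≥ 2` of `g`
is a zero of every `f ⪯ g`, and a common linear factor can be cancelled on both sides; this reduces
to `g` with simple zeros `u₀ > u₁ > ⋯`. There `f ⪯ g` amounts to the degree condition together with
`(-1)ʲ f(uⱼ) ≥ 0` for all `j`, which is visibly preserved by sums; conversely these signs produce a
zero of `f` strictly between consecutive `uⱼ` (and one below the last when `deg f = deg g`) by the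
intermediate value theorem. The dual statement `g ⪯ fᵢ` is the same as `fᵢ ⪯ (X - M) g` for `M`
above all the zeros involved.
-/

section Counting

variable {α : Type*}

theorem Multiset.countP_eq_zero_of_forall_le [Preorder α] {s : Multiset α} {p : α → Prop}
    [DecidablePred p] (hp : Monotone p) {M : α} (hM : ¬p M) (hs : ∀ x ∈ s, x ≤ M) :
    s.countP p = 0 :=
  Multiset.countP_eq_zero.2 fun x hx hpx => hM (hp (hs x hx) hpx)

theorem Multiset.countP_le_eq_countP_lt_add_count [LinearOrder α] (s : Multiset α) (a : α) :
    s.countP (a ≤ ·) = s.countP (a < ·) + s.count a := by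
  induction s using Multiset.induction_on with
  | empty => simp
  | cons b s ih =>
    simp only [Multiset.countP_cons, Multiset.count_cons, ih]
    rcases lt_trichotomy a b with hab | rfl | hab
    · simp [hab.le, hab, hab.ne]
      omega
    · simp
      omega
    · simp [not_le.2 hab, not_lt.2 hab.le, hab.ne']

theorem List.SortedGE.lt_countP_coe_iff [Preorder α] {l : List α} (hl : l.SortedGE)
    {p : α → Prop} [DecidablePred p] (hp : Monotone p) {i : ℕ} :
    i < (l : Multiset α).countP p ↔ ∃ h : i < l.length, p l[i] := by
  induction l generalizing i with
  | nil => simp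
  | cons a l ih =>
    obtain ⟨ha, hl'⟩ := List.pairwise_cons.1 hl.pairwise
    rw [← Multiset.cons_coe, Multiset.countP_cons]
    by_cases hpa : p a
    · cases i with
      | zero => simp [hpa]
      | succ i => simpa only [hpa, if_true, Nat.add_lt_add_iff_right, List.length_cons,
          List.getElem_cons_succ] using ih hl'.sortedGE
    · have hzero : (l : Multiset α).countP p = 0 :=
        Multiset.countP_eq_zero.2 fun b hb hpb => hpa (hp (ha b hb) hpb)
      simp only [hzero, hpa, if_false, Nat.add_zero, Nat.not_lt_zero, false_iff, not_exists]
      intro hi hpi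
      exact hpa (hp (hl.getElem_ge_getElem_of_le (hj := by simp) (Nat.zero_le i)) hpi)

theorem List.SortedGT.countP_coe_getElem_lt [LinearOrder α] {u : List α} (hu : u.SortedGT)
    {j : ℕ} (hj : j < u.length) : (u : Multiset α).countP (u[j] < ·) = j :=
  eq_of_forall_lt_iff fun i => by
    rw [hu.sortedGE.lt_countP_coe_iff fun _ _ hxy hx => hx.trans_le hxy]
    exact ⟨fun ⟨_, hlt⟩ => hu.getElem_lt_getElem_iff.1 hlt,
      fun hij => ⟨by omega, hu.getElem_lt_getElem_iff.2 hij⟩⟩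

end Counting

section Interlacing

variable {α : Type*}

/-- Multiset form of `s ⪯ t`: in every upper set, `t` has at least as many elements as `s`
and at most one more. -/
def Interlacing [Preorder α] (s t : Multiset α) : Prop :=
  ∀ (p : α → Prop) [DecidablePred p], Monotone p →
    s.countP p ≤ t.countP p ∧ t.countP p ≤ s.countP p + 1

theorem Interlacing.card_le [Preorder α] {s t : Multiset α} (h : Interlacing s t) :
    Multiset.card s ≤ Multiset.card t ∧ Multiset.card t ≤ Multiset.card s + 1 := by
  have hcard (r : Multiset α) : r.countP (fun _ => True) = Multiset.card r :=
    Multiset.countP_eq_card.2 fun _ _ => trivial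
  simpa only [hcard] using h (fun _ => True) monotone_const

theorem interlacing_coe_iff [Preorder α] {w u : List α} (hw : w.SortedGE) (hu : u.SortedGE) :
    Interlacing (w : Multiset α) u ↔
      (u.length = w.length ∨ u.length = w.length + 1) ∧
      (∀ (i : ℕ) (hw : i < w.length) (hu : i < u.length), w[i] ≤ u[i]) ∧
      (∀ (i : ℕ) (hu : i + 1 < u.length) (hw : i < w.length), u[i + 1] ≤ w[i]) := by
  constructor
  · classical
    intro h
    have hlen := h.card_le
    simp only [Multiset.coe_card] at hlen
    refine ⟨by omega, fun i hiw hiu => ?_, fun i hiu hiw => ?_⟩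
    · have hmono : Monotone (w[i] ≤ ·) := fun _ _ hxy hx => hx.trans hxy
      have hi : i < (u : Multiset α).countP (w[i] ≤ ·) :=
        ((hw.lt_countP_coe_iff hmono).2 ⟨hiw, le_rfl⟩).trans_le (h _ hmono).1
      exact ((hu.lt_countP_coe_iff hmono).1 hi).2
    · have hmono : Monotone (u[i + 1] ≤ ·) := fun _ _ hxy hx => hx.trans hxy
      have hi : i + 1 < (w : Multiset α).countP (u[i + 1] ≤ ·) + 1 :=
        ((hu.lt_countP_coe_iff hmono).2 ⟨hiu, le_rfl⟩).trans_le (h _ hmono).2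
      exact ((hw.lt_countP_coe_iff hmono).1 (by omega)).2
  · rintro ⟨hlen, hle, hge⟩ p _ hp
    constructor
    · by_contra! hlt
      obtain ⟨hi, hpi⟩ := (hw.lt_countP_coe_iff hp).1 hlt
      exact lt_irrefl _ ((hu.lt_countP_coe_iff hp).2 ⟨by omega, hp (hle _ hi (by omega)) hpi⟩)
    · by_contra! hlt
      obtain ⟨hi, hpi⟩ := (hu.lt_countP_coe_iff hp).1 hlt
      exact lt_irrefl _ ((hw.lt_countP_coe_iff hp).2 ⟨by omega, hp (hge _ hi (by omega)) hpi⟩)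

theorem interlacing_cons_cons_iff [Preorder α] {s t : Multiset α} {a : α} :
    Interlacing (a ::ₘ s) (a ::ₘ t) ↔ Interlacing s t := by
  refine forall_congr' fun p => forall_congr' fun _ => forall_congr' fun _ => ?_
  simp only [Multiset.countP_cons]
  split_ifs <;> omega

theorem Interlacing.of_cons_of_forall_lt [Preorder α] {s t : Multiset α} {L : α}
    (h : Interlacing s (L ::ₘ t)) (hs : ∀ x ∈ s, L < x) (ht : ∀ x ∈ t, L < x)
    (hcard : Multiset.card s ≤ Multiset.card t) : Interlacing s t := by
  intro p _ hp
  have hst := h p hp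
  rw [Multiset.countP_cons] at hst
  by_cases hpL : p L
  · have hall (r : Multiset α) (hr : ∀ x ∈ r, L < x) : r.countP p = Multiset.card r :=
      Multiset.countP_eq_card.2 fun x hx => hp (hr x hx).le hpL
    rw [hall s hs, hall t ht] at hst ⊢
    omega
  · simpa [hpL] using hst

theorem interlacing_cons_iff [LinearOrder α] {s t : Multiset α} {M : α} (hs : ∀ x ∈ s, x ≤ M) :
    Interlacing t (M ::ₘ s) ↔ Interlacing s t ∧ ∀ x ∈ t, x ≤ M := by
  have key (ht : ∀ x ∈ t, x ≤ M) (p : α → Prop) [DecidablePred p] (hp : Monotone p) :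
      (t.countP p ≤ (M ::ₘ s).countP p ∧ (M ::ₘ s).countP p ≤ t.countP p + 1) ↔
        (s.countP p ≤ t.countP p ∧ t.countP p ≤ s.countP p + 1) := by
    rw [Multiset.countP_cons]
    by_cases hpM : p M
    · simp only [hpM, if_true]
      omega
    · simp [hpM, Multiset.countP_eq_zero_of_forall_le hp hpM hs,
        Multiset.countP_eq_zero_of_forall_le hp hpM ht]
  constructor
  · intro h
    have hlt : ∀ x ∈ t, x ≤ M := by
      have hmono : Monotone (M < ·) := fun _ _ hxy hx => hx.trans_le hxy
      have h0 := (h _ hmono).1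
      rw [Multiset.countP_cons, Multiset.countP_eq_zero_of_forall_le hmono (lt_irrefl M) hs,
        if_neg (lt_irrefl M), Nat.le_zero, Multiset.countP_eq_zero] at h0
      exact fun x hx => not_lt.1 (h0 x hx)
    exact ⟨fun p _ hp => (key hlt p hp).1 (h p hp), hlt⟩
  · rintro ⟨h, ht⟩ p _ hp
    exact (key ht p hp).2 (h p hp)

theorem Interlacing.mem_of_one_lt_count [LinearOrder α] {s t : Multiset α} (h : Interlacing s t)
    {a : α} (ha : 1 < t.count a) : a ∈ s := by
  have hle := (h (a ≤ ·) fun _ _ hxy hx => hx.trans hxy).2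
  have hlt := (h (a < ·) fun _ _ hxy hx => hx.trans_le hxy).1
  rw [Multiset.countP_le_eq_countP_lt_add_count, Multiset.countP_le_eq_countP_lt_add_count] at hle
  rw [← Multiset.one_le_count_iff_mem]
  omega

theorem Interlacing.countP_lt_eq [LinearOrder α] {s t : Multiset α} (h : Interlacing s t) {a : α}
    (hat : a ∈ t) (has : a ∉ s) : s.countP (a < ·) = t.countP (a < ·) := by
  have hle := (h (a ≤ ·) fun _ _ hxy hx => hx.trans hxy).2
  have hlt := (h (a < ·) fun _ _ hxy hx => hx.trans_le hxy).1
  rw [Multiset.countP_le_eq_countP_lt_add_count, Multiset.countP_le_eq_countP_lt_add_count,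
    Multiset.count_eq_zero_of_notMem has] at hle
  have := Multiset.count_pos.2 hat
  omega

end Interlacing

section PositiveLeadingCoeff

variable {R : Type*} [Semiring R] [PartialOrder R] [IsOrderedCancelAddMonoid R] {F G : R[X]}

theorem leadingCoeff_add_pos (hF : 0 < F.leadingCoeff) (hG : 0 < G.leadingCoeff) :
    0 < (F + G).leadingCoeff := by
  rcases lt_trichotomy F.degree G.degree with h | h | h
  · rwa [leadingCoeff_add_of_degree_lt h]
  · rw [leadingCoeff_add_of_degree_eq h (add_pos hF hG).ne']
    exact add_pos hF hG
  · rwa [leadingCoeff_add_of_degree_lt' h]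

theorem natDegree_add_of_leadingCoeff_pos (hF : 0 < F.leadingCoeff) (hG : 0 < G.leadingCoeff) :
    (F + G).natDegree = max F.natDegree G.natDegree := by
  apply natDegree_eq_of_degree_eq_some
  rw [degree_add_eq_of_leadingCoeff_add_ne_zero (add_pos hF hG).ne',
    degree_eq_natDegree (leadingCoeff_ne_zero.1 hF.ne'),
    degree_eq_natDegree (leadingCoeff_ne_zero.1 hG.ne')]
  norm_cast

end PositiveLeadingCoeff

theorem neg_one_pow_countP_mul_prod_nonneg {R : Type*} [CommRing R] [LinearOrder R]
    [IsStrictOrderedRing R] (s : Multiset R) (a : R) :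
    0 ≤ (-1) ^ s.countP (a < ·) * (s.map (a - ·)).prod := by
  induction s using Multiset.induction_on with
  | empty => simp
  | cons b s ih =>
    rw [Multiset.countP_cons, Multiset.map_cons, Multiset.prod_cons]
    by_cases hab : a < b
    · rw [if_pos hab, pow_succ]
      calc (0 : R) ≤ (b - a) * ((-1) ^ s.countP (a < ·) * (s.map (a - ·)).prod) :=
            mul_nonneg (sub_nonneg.2 hab.le) ih
        _ = _ := by ring
    · rw [if_neg hab, add_zero, mul_left_comm]
      exact mul_nonneg (sub_nonneg.2 (not_lt.1 hab)) ih

theorem AllRealRoots.eval_eq_leadingCoeff_mul_prod {F : ℝ[X]} (hF : AllRealRoots F) (a : ℝ) :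
    F.eval a = F.leadingCoeff * (F.roots.map (a - ·)).prod := by
  conv_lhs => rw [← C_leadingCoeff_mul_prod_multiset_X_sub_C hF]
  simp [eval_multiset_prod, Multiset.map_map]

theorem exists_zeros_between {f : ℝ → ℝ} (hf : Continuous f) {u : List ℝ} (hu : u.SortedGT)
    (hne : u ≠ []) (hsign : ∀ (j : ℕ) (hj : j < u.length), 0 < (-1) ^ j * f u[j]) :
    ∃ r : List ℝ, r.length + 1 = u.length ∧ (∀ x ∈ r, f x = 0) ∧
      ∀ (j : ℕ) (hj : j + 1 < u.length) (hr : j < r.length), u[j + 1] < r[j] ∧ r[j] < u[j] := by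
  induction u generalizing f with
  | nil => contradiction
  | cons a t ih =>
    cases t with
    | nil => exact ⟨[], rfl, by simp, by simp⟩
    | cons b t =>
      have hba : b < a := (List.pairwise_cons.1 hu.pairwise).1 b List.mem_cons_self
      have hfa : 0 < f a := by simpa using hsign 0 (Nat.succ_pos _)
      have hfb : f b < 0 := by simpa using hsign 1 (Nat.succ_lt_succ (Nat.succ_pos _))
      obtain ⟨x, ⟨hbx, hxa⟩, hx⟩ := intermediate_value_Ioo hba.le hf.continuousOn ⟨hfb, hfa⟩
      obtain ⟨r, hlen, hroot, hbetween⟩ := ih hf.neg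
        (List.pairwise_cons.1 hu.pairwise).2.sortedGT (List.cons_ne_nil b t)
        fun j hj => by simpa [pow_succ] using hsign (j + 1) (Nat.succ_lt_succ hj)
      refine ⟨x :: r, by simpa using hlen, ?_, ?_⟩
      · simpa [hx] using fun y hy => neg_eq_zero.1 (hroot y hy)
      · intro j hj hr
        cases j with
        | zero => exact ⟨hbx, hxa⟩
        | succ j => simpa using hbetween j (Nat.lt_of_succ_lt_succ hj) (Nat.lt_of_succ_lt_succ hr)

section InterlacesRoots

/-- `F ⪯ U` for a multiset `U` of reals, standing for the zeros of the larger polynomial. -/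
def InterlacesRoots (F : ℝ[X]) (U : Multiset ℝ) : Prop :=
  0 < F.leadingCoeff ∧ AllRealRoots F ∧ Interlacing F.roots U

variable {F G : ℝ[X]} {U : Multiset ℝ}

theorem interlacesRoots_X_sub_C_mul_iff {a : ℝ} :
    InterlacesRoots ((X - C a) * F) (a ::ₘ U) ↔ InterlacesRoots F U := by
  by_cases hF : F = 0
  · simp [InterlacesRoots, hF]
  have hroots : ((X - C a) * F).roots = a ::ₘ F.roots := by
    rw [roots_mul (mul_ne_zero (X_sub_C_ne_zero a) hF), roots_X_sub_C, Multiset.singleton_add]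
  simp only [InterlacesRoots, AllRealRoots, leadingCoeff_mul, leadingCoeff_X_sub_C, one_mul,
    hroots, natDegree_mul (X_sub_C_ne_zero a) hF, natDegree_X_sub_C, Multiset.card_cons,
    interlacing_cons_cons_iff, add_comm 1, Nat.add_right_cancel_iff]

theorem InterlacesRoots.natDegree (h : InterlacesRoots F U) :
    F.natDegree = Multiset.card U ∨ F.natDegree + 1 = Multiset.card U := by
  have := h.2.2.card_le
  rw [h.2.1] at this
  omega

theorem InterlacesRoots.X_sub_C_dvd (h : InterlacesRoots F U) {a : ℝ} (ha : 1 < U.count a) :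
    X - C a ∣ F :=
  dvd_iff_isRoot.2 (isRoot_of_mem_roots (h.2.2.mem_of_one_lt_count ha))

theorem InterlacesRoots.sign_nonneg (h : InterlacesRoots F U) {a : ℝ} (ha : a ∈ U) :
    0 ≤ (-1) ^ U.countP (a < ·) * F.eval a := by
  by_cases haF : a ∈ F.roots
  · rw [(isRoot_of_mem_roots haF).eq_zero, mul_zero]
  rw [h.2.1.eval_eq_leadingCoeff_mul_prod, ← h.2.2.countP_lt_eq ha haF, mul_left_comm]
  exact mul_nonneg h.1.le (neg_one_pow_countP_mul_prod_nonneg _ a)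

theorem interlacesRoots_of_sign_pos (hU : U.Nodup) (hF : 0 < F.leadingCoeff)
    (hdeg : F.natDegree + 1 = Multiset.card U)
    (hsign : ∀ a ∈ U, 0 < (-1) ^ U.countP (a < ·) * F.eval a) : InterlacesRoots F U := by
  set u := U.sort (· ≥ ·)
  have hUu : (u : Multiset ℝ) = U := Multiset.sort_eq _ _
  have hu : u.SortedGT := (Multiset.pairwise_sort U _).sortedGE.sortedGT_of_nodup
    (by rwa [← Multiset.coe_nodup, hUu])
  have hlen : u.length = Multiset.card U := Multiset.length_sort _
  obtain ⟨r, hrlen, hroot, hbetween⟩ := exists_zeros_between F.continuous hu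
    (List.ne_nil_of_length_pos (by omega)) fun j hj => by
      simpa only [← hUu, hu.countP_coe_getElem_lt hj] using
        hsign u[j] (hUu ▸ Multiset.mem_coe.2 (List.getElem_mem hj))
  have hr : r.SortedGT := List.sortedGT_of_getElem_gt_getElem_of_lt fun i j hi hj hji =>
    calc r[i] < u[i] := (hbetween i (by omega) hi).2
      _ ≤ u[j + 1] := hu.sortedGE.getElem_ge_getElem_of_le hji
      _ < r[j] := (hbetween j (by omega) hj).1
  have hroots : F.roots = r := by
    have hsub : (r : Multiset ℝ) ≤ F.roots :=
      (Multiset.le_iff_subset (Multiset.coe_nodup.2 hr.nodup)).2 fun x hx =>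
        (mem_roots (leadingCoeff_ne_zero.1 hF.ne')).2 (hroot x hx)
    have := card_roots' F
    exact (Multiset.eq_of_le_of_card_le hsub (by rw [Multiset.coe_card]; omega)).symm
  refine ⟨hF, by rw [AllRealRoots, hroots, Multiset.coe_card]; omega, ?_⟩
  rw [hroots, ← hUu, interlacing_coe_iff hr.sortedGE hu.sortedGE]
  exact ⟨Or.inr (by omega), fun i hi _ => (hbetween i (by omega) hi).2.le,
    fun i hiu hi => (hbetween i hiu hi).1.le⟩

theorem interlacesRoots_of_sign_nonneg_of_natDegree_succ (hU : U.Nodup)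
    (hF : 0 < F.leadingCoeff) (hdeg : F.natDegree + 1 = Multiset.card U)
    (hsign : ∀ a ∈ U, 0 ≤ (-1) ^ U.countP (a < ·) * F.eval a) : InterlacesRoots F U := by
  induction U using Multiset.strongInductionOn generalizing F with
  | ih U IH =>
  by_cases! hzero : ∀ a ∈ U, F.eval a ≠ 0
  · exact interlacesRoots_of_sign_pos hU hF hdeg fun a ha =>
      (hsign a ha).lt_of_ne (mul_ne_zero (pow_ne_zero _ (by norm_num)) (hzero a ha)).symm
  obtain ⟨a, ha, hFa⟩ := hzero
  obtain ⟨K, rfl⟩ := dvd_iff_isRoot.2 hFa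
  have hK0 : K ≠ 0 := right_ne_zero_of_mul (leadingCoeff_ne_zero.1 hF.ne')
  have hUa : a ::ₘ U.erase a = U := Multiset.cons_erase ha
  rw [leadingCoeff_mul, leadingCoeff_X_sub_C, one_mul] at hF
  rw [natDegree_mul (X_sub_C_ne_zero a) hK0, natDegree_X_sub_C, ← hUa, Multiset.card_cons] at hdeg
  rw [← hUa, interlacesRoots_X_sub_C_mul_iff]
  refine IH _ (Multiset.erase_lt.2 ha) (hU.erase a) hF (by omega) fun b hb => ?_
  obtain ⟨hba, -⟩ := hU.mem_erase_iff.1 hb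
  have hsb := hsign b (Multiset.mem_of_mem_erase hb)
  rw [← hUa, Multiset.countP_cons, eval_mul, eval_sub, eval_X, eval_C] at hsb
  rcases hba.lt_or_gt with hlt | hgt
  · rw [if_pos hlt, pow_succ] at hsb
    refine (mul_nonneg_iff_of_pos_left (sub_pos.2 hlt)).1 ?_
    linarith
  · rw [if_neg (not_lt.2 hgt.le), add_zero, mul_left_comm] at hsb
    exact (mul_nonneg_iff_of_pos_left (sub_pos.2 hgt)).1 hsb

theorem interlacesRoots_of_sign_nonneg (hU : U.Nodup) (hF : 0 < F.leadingCoeff)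
    (hdeg : F.natDegree = Multiset.card U ∨ F.natDegree + 1 = Multiset.card U)
    (hsign : ∀ a ∈ U, 0 ≤ (-1) ^ U.countP (a < ·) * F.eval a) : InterlacesRoots F U := by
  rcases hdeg with hdeg | hdeg
  swap
  · exact interlacesRoots_of_sign_nonneg_of_natDegree_succ hU hF hdeg hsign
  -- A point `L` below all zeros in sight, with the sign `F` has at `-∞`, is adjoined to `U`.
  have hF0 : F ≠ 0 := leadingCoeff_ne_zero.1 hF.ne'
  obtain ⟨L, hL⟩ : ∃ L, ∀ x ∈ U + F.roots, L < x := by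
    obtain ⟨b, hb⟩ := (U + F.roots).toFinset.bddBelow
    exact ⟨b - 1, fun x hx => (sub_one_lt b).trans_le (hb (by simpa using hx))⟩
  have hLU (x) (hx : x ∈ U) : L < x := hL x (Multiset.mem_add.2 (Or.inl hx))
  have hLF (x) (hx : x ∈ F.roots) : L < x := hL x (Multiset.mem_add.2 (Or.inr hx))
  have hsignL : 0 ≤ (-1) ^ (L ::ₘ U).countP (L < ·) * F.eval L := by
    rw [Multiset.countP_cons, if_neg (lt_irrefl L), add_zero,
      Multiset.countP_eq_card.2 hLU, ← hdeg, ← Int.cast_negOnePow_natCast]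
    exact (zero_lt_negOnePow_mul_eval_of_lt_roots_of_leadingCoeff_nonneg
      (fun y hy => hLF y ((mem_roots hF0).2 hy)) hF.le).le
  have h : InterlacesRoots F (L ::ₘ U) :=
    interlacesRoots_of_sign_nonneg_of_natDegree_succ
      (Multiset.nodup_cons.2 ⟨fun hL => lt_irrefl L (hLU L hL), hU⟩) hF
      (by rw [Multiset.card_cons, hdeg]) fun a ha => by
        rcases Multiset.mem_cons.1 ha with rfl | ha
        · exact hsignL
        · rw [Multiset.countP_cons, if_neg (not_lt.2 (hLU a ha).le), add_zero]
          exact hsign a ha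
  exact ⟨hF, h.2.1, h.2.2.of_cons_of_forall_lt hLF hLU (by rw [h.2.1, hdeg])⟩

theorem InterlacesRoots.add (hF : InterlacesRoots F U) (hG : InterlacesRoots G U) :
    InterlacesRoots (F + G) U := by
  induction U using Multiset.strongInductionOn generalizing F G with
  | ih U IH =>
  by_cases hU : U.Nodup
  · refine interlacesRoots_of_sign_nonneg hU (leadingCoeff_add_pos hF.1 hG.1) ?_ fun a ha => ?_
    · rw [natDegree_add_of_leadingCoeff_pos hF.1 hG.1]
      rcases hF.natDegree with h | h <;> rcases hG.natDegree with h' | h' <;> omega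
    · rw [eval_add, mul_add]
      exact add_nonneg (hF.sign_nonneg ha) (hG.sign_nonneg ha)
  obtain ⟨a, ha⟩ : ∃ a, 1 < U.count a := by
    simpa [Multiset.nodup_iff_count_le_one] using hU
  have haU : a ∈ U := Multiset.count_pos.1 (by omega)
  have hUa : a ::ₘ U.erase a = U := Multiset.cons_erase haU
  obtain ⟨F', rfl⟩ := hF.X_sub_C_dvd ha
  obtain ⟨G', rfl⟩ := hG.X_sub_C_dvd ha
  rw [← hUa, interlacesRoots_X_sub_C_mul_iff] at hF hG
  rw [← mul_add, ← hUa, interlacesRoots_X_sub_C_mul_iff]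
  exact IH _ (Multiset.erase_lt.2 haU) hF hG

end InterlacesRoots

theorem interlaces_iff {g f : ℝ[X]} :
    Interlaces g f ↔ 0 < f.leadingCoeff ∧ AllRealRoots f ∧ InterlacesRoots g f.roots := by
  constructor
  · rintro ⟨hf, hg, u, v, hu, hv, hfu, hgv, hulen, hvlen, hlen, hvu, huv⟩
    refine ⟨hf, by rw [AllRealRoots, hfu, Multiset.coe_card, hulen], hg,
      by rw [AllRealRoots, hgv, Multiset.coe_card, hvlen], ?_⟩
    rw [hfu, hgv, interlacing_coe_iff hv.sortedGE hu.sortedGE]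
    simpa only [List.get_eq_getElem] using ⟨hlen, hvu, huv⟩
  · rintro ⟨hf, hfr, hg, hgr, h⟩
    have hu := Multiset.pairwise_sort f.roots (· ≥ ·)
    have hv := Multiset.pairwise_sort g.roots (· ≥ ·)
    rw [← Multiset.sort_eq f.roots (· ≥ ·), ← Multiset.sort_eq g.roots (· ≥ ·),
      interlacing_coe_iff hv.sortedGE hu.sortedGE] at h
    refine ⟨hf, hg, _, _, hu, hv, (Multiset.sort_eq _ _).symm, (Multiset.sort_eq _ _).symm,
      by rw [Multiset.length_sort, hfr], by rw [Multiset.length_sort, hgr], ?_⟩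
    simpa only [List.get_eq_getElem] using h

theorem interlaces_and_forall_le_iff {g f : ℝ[X]} {M : ℝ} (hM : ∀ x ∈ g.roots, x ≤ M) :
    (Interlaces g f ∧ ∀ x ∈ f.roots, x ≤ M) ↔
      0 < g.leadingCoeff ∧ AllRealRoots g ∧ InterlacesRoots f (M ::ₘ g.roots) := by
  simp only [interlaces_iff, InterlacesRoots, interlacing_cons_iff hM]
  tauto

theorem sum_interlaces_general (n : ℕ) (hn : 1 ≤ n) (g : Polynomial ℝ)
    (f : Fin n → Polynomial ℝ) :
    ((∀ i, Interlaces (f i) g) →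
      AllRealRoots (∑ i, f i) ∧ Interlaces (∑ i, f i) g) ∧
    ((∀ i, Interlaces g (f i)) →
      AllRealRoots (∑ i, f i) ∧ Interlaces g (∑ i, f i)) := by
  have hsum {U : Multiset ℝ} (h : ∀ i, InterlacesRoots (f i) U) : InterlacesRoots (∑ i, f i) U :=
    Finset.sum_induction_nonempty f (InterlacesRoots · U) (fun _ _ => InterlacesRoots.add)
      (Finset.univ_nonempty_iff.2 ⟨⟨0, hn⟩⟩) fun i _ => h i
  constructor
  · intro hfg
    simp only [interlaces_iff] at hfg ⊢
    have hF := hsum fun i => (hfg i).2.2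
    exact ⟨hF.2.1, (hfg ⟨0, hn⟩).1, (hfg ⟨0, hn⟩).2.1, hF⟩
  · intro hgf
    obtain ⟨M, hM⟩ := (g.roots + ∑ i, (f i).roots).toFinset.exists_le
    have hMg : ∀ x ∈ g.roots, x ≤ M := fun x hx => hM x (by simp [hx])
    have hf (i) := (interlaces_and_forall_le_iff hMg).1
      ⟨hgf i, fun x hx => hM x (Multiset.mem_toFinset.2 (Multiset.mem_add.2
        (Or.inr (Multiset.mem_sum.2 ⟨i, Finset.mem_univ i, hx⟩))))⟩
    have hF := hsum fun i => (hf i).2.2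
    exact ⟨hF.2.1, ((interlaces_and_forall_le_iff hMg).2 ⟨(hf ⟨0, hn⟩).1, (hf ⟨0, hn⟩).2.1, hF⟩).1⟩

/-- Sums of polynomials all interlacing (resp. interlaced by) a common
polynomial `g` are real-rooted and interlace (resp. are interlaced by) `g`. -/
theorem sum_interlaces (n : ℕ) (hn : 1 ≤ n) (g : Polynomial ℝ)
    (f : Fin n → Polynomial ℝ)
    (hg : AllRealRoots g ∧ 0 < g.leadingCoeff)
    (hf : ∀ i, AllRealRoots (f i) ∧ 0 < (f i).leadingCoeff) :
    ((∀ i, Interlaces (f i) g) →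
      AllRealRoots (∑ i, f i) ∧ Interlaces (∑ i, f i) g) ∧
    ((∀ i, Interlaces g (f i)) →
      AllRealRoots (∑ i, f i) ∧ Interlaces g (∑ i, f i)) :=
  sum_interlaces_general n hn g f
end

section
/- For every q > 0 with q ≠ 1, the polynomial C(z) = q²z⁶ + (q²+q)z⁵ + (4q²+6q+1)z⁴ + (4q²+6q+2)z³ + (q²+6q+4)z² + (q²+5q+4)z + 1 is Hurwitz stable, i.e., has no zeros z with Re z ≥ 0. -/
set_option maxHeartbeats 4000000
set_option maxRecDepth 8000

/-- The polynomial `C_{0,1}(z)` is Hurwitz stable for every positive `q ≠ 1`. -/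
theorem C01_hurwitz_stable (q : ℝ) (hq : 0 < q) (hq1 : q ≠ 1) :
    ∀ z : ℂ, 0 ≤ z.re →
      (q : ℂ) ^ 2 * z ^ 6 + ((q : ℂ) ^ 2 + q) * z ^ 5 +
        (4 * (q : ℂ) ^ 2 + 6 * q + 1) * z ^ 4 +
        (4 * (q : ℂ) ^ 2 + 6 * q + 2) * z ^ 3 +
        ((q : ℂ) ^ 2 + 6 * q + 4) * z ^ 2 +
        ((q : ℂ) ^ 2 + 5 * q + 4) * z + 1 ≠ 0 := by
  intro z hz0 h
  obtain ⟨x, y⟩ := z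
  have hx : (0:ℝ) ≤ x := hz0
  have h1 := congrArg Complex.re h
  have h2 := congrArg Complex.im h
  simp only [Complex.add_re, Complex.add_im, Complex.mul_re, Complex.mul_im, pow_succ,
    Complex.ofReal_re, Complex.ofReal_im, Complex.one_re, Complex.one_im, Complex.zero_re,
    Complex.zero_im, Complex.re_ofNat, Complex.im_ofNat, pow_zero] at h1 h2
  have hF : x^6*q^2 + x^5*q^2 + x^5*q - 15*x^4*q^2*y^2 + 4*x^4*q^2 + 6*x^4*q + x^4 - 10*x^3*q^2*y^2 + 4*x^3*q^2 - 10*x^3*q*y^2 + 6*x^3*q + 2*x^3 + 15*x^2*q^2*y^4 - 24*x^2*q^2*y^2 + x^2*q^2 - 36*x^2*q*y^2 + 6*x^2*q - 6*x^2*y^2 + 4*x^2 + 5*x*q^2*y^4 - 12*x*q^2*y^2 + x*q^2 + 5*x*q*y^4 - 18*x*q*y^2 + 5*x*q - 6*x*y^2 + 4*x - q^2*y^6 + 4*q^2*y^4 - q^2*y^2 + 6*q*y^4 - 6*q*y^2 + y^4 - 4*y^2 + 1 = 0 := by linear_combination h1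
  have hG : y * (6*x^5*q^2 + 5*x^4*q^2 + 5*x^4*q - 20*x^3*q^2*y^2 + 16*x^3*q^2 + 24*x^3*q + 4*x^3 - 10*x^2*q^2*y^2 + 12*x^2*q^2 - 10*x^2*q*y^2 + 18*x^2*q + 6*x^2 + 6*x*q^2*y^4 - 16*x*q^2*y^2 + 2*x*q^2 - 24*x*q*y^2 + 12*x*q - 4*x*y^2 + 8*x + q^2*y^4 - 4*q^2*y^2 + q^2 + q*y^4 - 6*q*y^2 + 5*q - 2*y^2 + 4) = 0 := by linear_combination h2
  rcases eq_or_ne y 0 with hy | hy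
  · subst hy
    have hm : ∀ i j : ℕ, (0:ℝ) ≤ x ^ i * q ^ j := fun i j =>
      mul_nonneg (pow_nonneg hx i) (pow_nonneg hq.le j)
    nlinarith [hF, hm 6 2, hm 5 2, hm 5 1, hm 4 2, hm 4 1, hm 4 0, hm 3 2, hm 3 1, hm 3 0,
      hm 2 2, hm 2 1, hm 2 0, hm 1 2, hm 1 1, hm 1 0]
  · have hyR : y * (-32768*x^15*q^10 - 81920*x^14*q^10 - 81920*x^14*q^9 - 212992*x^13*q^10 - 360448*x^13*q^9 - 114688*x^13*q^8 - 335872*x^12*q^10 - 827392*x^12*q^9 - 598016*x^12*q^8 - 106496*x^12*q^7 - 473088*x^11*q^10 - 1478656*x^11*q^9 - 1568768*x^11*q^8 - 618496*x^11*q^7 - 71680*x^11*q^6 - 506880*x^10*q^10 - 1909760*x^10*q^9 - 2703360*x^10*q^8 - 1699840*x^10*q^7 - 435200*x^10*q^6 - 35840*x^10*q^5 - 461824*x^9*q^10 - 2037760*x^9*q^9 - 3523584*x^9*q^8 - 2985984*x^9*q^7 - 1227776*x^9*q^6 - 219136*x^9*q^5 - 13312*x^9*q^4 - 343552*x^8*q^10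 - 1707008*x^8*q^9 - 3480576*x^8*q^8 - 3701248*x^8*q^7 - 2118144*x^8*q^6 - 609280*x^8*q^5 - 78848*x^8*q^4 - 3584*x^8*q^3 - 205568*x^7*q^10 - 1162752*x^7*q^9 - 2725632*x^7*q^8 - 3450880*x^7*q^7 - 2506624*x^7*q^6 - 1011200*x^7*q^5 - 207872*x^7*q^4 - 19456*x^7*q^3 - 640*x^7*q^2 - 99968*x^6*q^10 - 630528*x^6*q^9 - 1672448*x^6*q^8 - 2448128*x^6*q^7 - 2143296*x^6*q^6 - 1114944*x^6*q^5 - 321664*x^6*q^4 - 46720*x^6*q^3 - 3008*x^6*q^2 - 64*x^6*q - 37632*x^5*q^10 - 269760*x^5*q^9 - 801280*x^5*q^8 - 1330688*x^5*q^7 - 1351680*x^5*q^6 - 852864*x^5*q^5 - 318464*x^5*q^4 - 63488*x^5*q^3 - 5888*x^5*q^2 - 192*x^5*q - 9600*x^4*q^10 - 85952*x^4*q^9 - 291456*x^4*q^8 - 544768*x^4*q^7 - 630016*x^4*q^6 - 465152*x^4*q^5 - 213888*x^4*q^4 - 55808*x^4*q^3 - 7040*x^4*q^2 - 320*x^4*q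 - 1728*x^3*q^10 - 19776*x^3*q^9 - 78080*x^3*q^8 - 164160*x^3*q^7 - 212832*x^3*q^6 - 179200*x^3*q^5 - 97344*x^3*q^4 - 31808*x^3*q^3 - 5280*x^3*q^2 - 320*x^3*q - 288*x^2*q^10 - 3360*x^2*q^9 - 14912*x^2*q^8 - 34784*x^2*q^7 - 49424*x^2*q^6 - 46256*x^2*q^5 - 29088*x^2*q^4 - 11648*x^2*q^3 - 2544*x^2*q^2 - 208*x^2*q - 144*x*q^9 - 1176*x*q^8 - 3632*x*q^7 - 5992*x*q^6 - 6208*x*q^5 - 4456*x*q^4 - 2224*x*q^3 - 664*x*q^2 - 80*x*q - 12*q^8 - 36*q^7 - 12*q^6 + 60*q^5 + 60*q^4 - 12*q^3 - 36*q^2 - 12*q) = 0 := by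
      linear_combination ((15616*x^9*q^8 + 23424*x^8*q^8 + 23424*x^8*q^7 - 5376*x^7*q^8*y^2 + 32128*x^7*q^8 + 55040*x^7*q^7 + 18304*x^7*q^6 - 6272*x^6*q^8*y^2 + 23952*x^6*q^8 - 6272*x^6*q^7*y^2 + 65360*x^6*q^7 + 51056*x^6*q^6 + 9648*x^6*q^5 - 5888*x^5*q^8*y^2 + 18184*x^5*q^8 - 10240*x^5*q^7*y^2 + 57520*x^5*q^7 - 3584*x^5*q^6*y^2 + 66480*x^5*q^6 + 29008*x^5*q^5 + 3592*x^5*q^4 - 2800*x^4*q^8*y^2 + 8832*x^4*q^8 - 8240*x^4*q^7*y^2 + 34448*x^4*q^7 - 6800*x^4*q^6*y^2 + 53304*x^4*q^6 - 1360*x^4*q^5*y^2 + 37656*x^4*q^5 + 10920*x^4*q^4 + 952*x^4*q^3 - 1336*x^3*q^8*y^2 + 3828*x^3*q^8 - 4304*x^3*q^7*y^2 + 16420*x^3*q^7 - 5424*x^3*q^6*y^2 + 30084*x^3*q^6 - 2608*x^3*q^5*y^2 + 28080*x^3*q^5 - 344*x^3*q^4*y^2 + 13124*x^3*q^4 + 2636*x^3*q^3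 + 164*x^3*q^2 - 384*x^2*q^8*y^2 + 1128*x^2*q^8 - 1552*x^2*q^7*y^2 + 5410*x^2*q^7 - 2488*x^2*q^6*y^2 + 11374*x^2*q^6 - 1880*x^2*q^5*y^2 + 12924*x^2*q^5 - 616*x^2*q^4*y^2 + 8172*x^2*q^4 - 56*x^2*q^3*y^2 + 2706*x^2*q^3 + 382*x^2*q^2 + 16*x^2*q - 36*x*q^8*y^2 + 132*x*q^8 - 268*x*q^7*y^2 + 908*x*q^7 - 596*x*q^6*y^2 + 2368*x*q^6 - 592*x*q^5*y^2 + 3160*x*q^5 - 292*x*q^4*y^2 + 2372*x*q^4 - 68*x*q^3*y^2 + 1004*x*q^3 - 4*x*q^2*y^2 + 216*x*q^2 + 16*x*q - 14*q^7*y^2 + 52*q^7 - 50*q^6*y^2 + 200*q^6 - 68*q^5*y^2 + 308*q^5 - 44*q^4*y^2 + 248*q^4 - 14*q^3*y^2 + 116*q^3 - 2*q^2*y^2 + 32*q^2 + 4*q) * y) * hF + (-8064*x^10*q^8 - 13440*x^9*q^8 - 13440*x^9*q^7 + 13056*x^8*q^8*y^2 - 22464*x^8*q^8 - 38016*x^8*q^7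 - 12096*x^8*q^6 + 17408*x^7*q^8*y^2 - 20664*x^7*q^8 + 17408*x^7*q^7*y^2 - 53784*x^7*q^7 - 40392*x^7*q^6 - 7272*x^7*q^5 - 896*x^6*q^8*y^4 + 19328*x^6*q^8*y^2 - 18816*x^6*q^8 + 33536*x^6*q^7*y^2 - 57792*x^6*q^7 + 11648*x^6*q^6*y^2 - 63896*x^6*q^6 - 26432*x^6*q^5 - 3080*x^6*q^4 - 896*x^5*q^8*y^4 + 11392*x^5*q^8*y^2 - 11340*x^5*q^8 - 896*x^5*q^7*y^4 + 32640*x^5*q^7*y^2 - 41916*x^5*q^7 + 26496*x^5*q^6*y^2 - 61992*x^5*q^6 + 5248*x^5*q^5*y^2 - 41832*x^5*q^5 - 11340*x^5*q^4 - 924*x^5*q^3 - 832*x^4*q^8*y^4 + 6808*x^4*q^8*y^2 - 5748*x^4*q^8 - 1408*x^4*q^7*y^4 + 22480*x^4*q^7*y^2 - 24002*x^4*q^7 - 448*x^4*q^6*y^4 + 27312*x^4*q^6*y^2 - 42736*x^4*q^6 + 12592*x^4*q^5*y^2 - 38336*x^4*q^5 + 1656*x^4*q^4*y^2 - 17080*x^4*q^4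 - 3150*x^4*q^3 - 180*x^4*q^2 - 328*x^3*q^8*y^4 + 2448*x^3*q^8*y^2 - 2148*x^3*q^8 - 1000*x^3*q^7*y^4 + 10384*x^3*q^7*y^2 - 9626*x^3*q^7 - 824*x^3*q^6*y^4 + 17152*x^3*q^6*y^2 - 19786*x^3*q^6 - 152*x^3*q^5*y^4 + 12800*x^3*q^5*y^2 - 22240*x^3*q^5 + 3952*x^3*q^4*y^2 - 13632*x^3*q^4 + 368*x^3*q^3*y^2 - 4210*x^3*q^3 - 530*x^3*q^2 - 20*x^3*q - 168*x^2*q^8*y^4 + 804*x^2*q^8*y^2 - 420*x^2*q^8 - 496*x^2*q^7*y^4 + 3744*x^2*q^7*y^2 - 2488*x^2*q^7 - 600*x^2*q^6*y^4 + 7316*x^2*q^6*y^2 - 5844*x^2*q^6 - 272*x^2*q^5*y^4 + 7200*x^2*q^5*y^2 - 7578*x^2*q^5 - 32*x^2*q^4*y^4 + 3540*x^2*q^4*y^2 - 5768*x^2*q^4 + 768*x^2*q^3*y^2 - 2448*x^2*q^3 + 52*x^2*q^2*y^2 - 480*x^2*q^2 - 30*x^2*q - 36*x*q^8*y^4 +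 132*x*q^8*y^2 - 148*x*q^7*y^4 + 790*x*q^7*y^2 - 196*x*q^7 - 232*x*q^6*y^4 + 1902*x*q^6*y^2 - 764*x*q^6 - 168*x*q^5*y^4 + 2360*x*q^5*y^2 - 1252*x*q^5 - 52*x*q^4*y^4 + 1592*x*q^4*y^2 - 1152*x*q^4 - 4*x*q^3*y^4 + 558*x*q^3*y^2 - 644*x*q^3 + 86*x*q^2*y^2 - 196*x*q^2 + 4*x*q*y^2 - 20*x*q - 14*q^7*y^4 + 52*q^7*y^2 - 36*q^6*y^4 + 204*q^6*y^2 - 12*q^6 - 32*q^5*y^4 + 318*q^5*y^2 - 28*q^5 - 12*q^4*y^4 + 252*q^4*y^2 - 24*q^4 - 2*q^3*y^4 + 108*q^3*y^2 - 16*q^3 + 24*q^2*y^2 - 12*q^2 + 2*q*y^2 - 4*q) * hG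
    have hR0 : (-32768*x^15*q^10 - 81920*x^14*q^10 - 81920*x^14*q^9 - 212992*x^13*q^10 - 360448*x^13*q^9 - 114688*x^13*q^8 - 335872*x^12*q^10 - 827392*x^12*q^9 - 598016*x^12*q^8 - 106496*x^12*q^7 - 473088*x^11*q^10 - 1478656*x^11*q^9 - 1568768*x^11*q^8 - 618496*x^11*q^7 - 71680*x^11*q^6 - 506880*x^10*q^10 - 1909760*x^10*q^9 - 2703360*x^10*q^8 - 1699840*x^10*q^7 - 435200*x^10*q^6 - 35840*x^10*q^5 - 461824*x^9*q^10 - 2037760*x^9*q^9 - 3523584*x^9*q^8 - 2985984*x^9*q^7 - 1227776*x^9*q^6 - 219136*x^9*q^5 - 13312*x^9*q^4 - 343552*x^8*q^10 - 1707008*x^8*q^9 - 3480576*x^8*q^8 - 3701248*x^8*q^7 - 2118144*x^8*q^6 - 609280*x^8*q^5 - 78848*x^8*q^4 - 3584*x^8*q^3 - 205568*x^7*q^10 - 1162752*x^7*q^9 - 2725632*x^7*q^8 - 3450880*x^7*q^7 - 2506624*x^7*q^6 - 1011200*x^7*q^5 - 207872*x^7*q^4 - 19456*x^7*q^3 - 640*x^7*q^2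 - 99968*x^6*q^10 - 630528*x^6*q^9 - 1672448*x^6*q^8 - 2448128*x^6*q^7 - 2143296*x^6*q^6 - 1114944*x^6*q^5 - 321664*x^6*q^4 - 46720*x^6*q^3 - 3008*x^6*q^2 - 64*x^6*q - 37632*x^5*q^10 - 269760*x^5*q^9 - 801280*x^5*q^8 - 1330688*x^5*q^7 - 1351680*x^5*q^6 - 852864*x^5*q^5 - 318464*x^5*q^4 - 63488*x^5*q^3 - 5888*x^5*q^2 - 192*x^5*q - 9600*x^4*q^10 - 85952*x^4*q^9 - 291456*x^4*q^8 - 544768*x^4*q^7 - 630016*x^4*q^6 - 465152*x^4*q^5 - 213888*x^4*q^4 - 55808*x^4*q^3 - 7040*x^4*q^2 - 320*x^4*q - 1728*x^3*q^10 - 19776*x^3*q^9 - 78080*x^3*q^8 - 164160*x^3*q^7 - 212832*x^3*q^6 - 179200*x^3*q^5 - 97344*x^3*q^4 - 31808*x^3*q^3 - 5280*x^3*q^2 - 320*x^3*q - 288*x^2*q^10 - 3360*x^2*q^9 - 14912*x^2*q^8 - 34784*x^2*q^7 - 49424*x^2*q^6 - 46256*x^2*q^5 - 29088*x^2*q^4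 - 11648*x^2*q^3 - 2544*x^2*q^2 - 208*x^2*q - 144*x*q^9 - 1176*x*q^8 - 3632*x*q^7 - 5992*x*q^6 - 6208*x*q^5 - 4456*x*q^4 - 2224*x*q^3 - 664*x*q^2 - 80*x*q - 12*q^8 - 36*q^7 - 12*q^6 + 60*q^5 + 60*q^4 - 12*q^3 - 36*q^2 - 12*q) = 0 := by
      rcases mul_eq_zero.mp hyR with h' | h'
      · exact absurd h' hy
      · exact h'
    have hkey : 12*q*(q-1)^2*(1+q)^5 + x * (32768*x^14*q^10 + 81920*x^13*q^10 + 81920*x^13*q^9 + 212992*x^12*q^10 + 360448*x^12*q^9 + 114688*x^12*q^8 + 335872*x^11*q^10 + 827392*x^11*q^9 + 598016*x^11*q^8 + 106496*x^11*q^7 + 473088*x^10*q^10 + 1478656*x^10*q^9 + 1568768*x^10*q^8 + 618496*x^10*q^7 + 71680*x^10*q^6 + 506880*x^9*q^10 + 1909760*x^9*q^9 + 2703360*x^9*q^8 + 1699840*x^9*q^7 + 435200*x^9*q^6 + 35840*x^9*q^5 + 461824*x^8*q^10 + 2037760*x^8*q^9 + 3523584*x^8*q^8 + 2985984*x^8*q^7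 + 1227776*x^8*q^6 + 219136*x^8*q^5 + 13312*x^8*q^4 + 343552*x^7*q^10 + 1707008*x^7*q^9 + 3480576*x^7*q^8 + 3701248*x^7*q^7 + 2118144*x^7*q^6 + 609280*x^7*q^5 + 78848*x^7*q^4 + 3584*x^7*q^3 + 205568*x^6*q^10 + 1162752*x^6*q^9 + 2725632*x^6*q^8 + 3450880*x^6*q^7 + 2506624*x^6*q^6 + 1011200*x^6*q^5 + 207872*x^6*q^4 + 19456*x^6*q^3 + 640*x^6*q^2 + 99968*x^5*q^10 + 630528*x^5*q^9 + 1672448*x^5*q^8 + 2448128*x^5*q^7 + 2143296*x^5*q^6 + 1114944*x^5*q^5 + 321664*x^5*q^4 + 46720*x^5*q^3 + 3008*x^5*q^2 + 64*x^5*q + 37632*x^4*q^10 + 269760*x^4*q^9 + 801280*x^4*q^8 + 1330688*x^4*q^7 + 1351680*x^4*q^6 + 852864*x^4*q^5 + 318464*x^4*q^4 + 63488*x^4*q^3 + 5888*x^4*q^2 + 192*x^4*q + 9600*x^3*q^10 + 85952*x^3*q^9 + 291456*x^3*q^8 + 544768*x^3*q^7 + 630016*x^3*q^6 + 465152*x^3*q^5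 + 213888*x^3*q^4 + 55808*x^3*q^3 + 7040*x^3*q^2 + 320*x^3*q + 1728*x^2*q^10 + 19776*x^2*q^9 + 78080*x^2*q^8 + 164160*x^2*q^7 + 212832*x^2*q^6 + 179200*x^2*q^5 + 97344*x^2*q^4 + 31808*x^2*q^3 + 5280*x^2*q^2 + 320*x^2*q + 288*x*q^10 + 3360*x*q^9 + 14912*x*q^8 + 34784*x*q^7 + 49424*x*q^6 + 46256*x*q^5 + 29088*x*q^4 + 11648*x*q^3 + 2544*x*q^2 + 208*x*q + 144*q^9 + 1176*q^8 + 3632*q^7 + 5992*q^6 + 6208*q^5 + 4456*q^4 + 2224*q^3 + 664*q^2 + 80*q) = 0 := by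
      linear_combination -hR0
    have hq2 : (0:ℝ) < (q-1)^2 := by
      have : q - 1 ≠ 0 := sub_ne_zero.mpr hq1
      positivity
    have hpos1 : (0:ℝ) < 12*q*(q-1)^2*(1+q)^5 := by
      have h5 : (0:ℝ) < (1+q)^5 := by positivity
      have h12 : (0:ℝ) < 12*q := by linarith
      calc (0:ℝ) < (12*q) * (q-1)^2 * ((1+q)^5) := by
            exact mul_pos (mul_pos h12 hq2) h5
        _ = 12*q*(q-1)^2*(1+q)^5 := by ring
    have hPnn : (0:ℝ) ≤ (32768*x^14*q^10 + 81920*x^13*q^10 + 81920*x^13*q^9 + 212992*x^12*q^10 + 360448*x^12*q^9 + 114688*x^12*q^8 + 335872*x^11*q^10 + 827392*x^11*q^9 + 598016*x^11*q^8 + 106496*x^11*q^7 + 473088*x^10*q^10 + 1478656*x^10*q^9 + 1568768*x^10*q^8 + 618496*x^10*q^7 + 71680*x^10*q^6 + 506880*x^9*q^10 + 1909760*x^9*q^9 + 2703360*x^9*q^8 + 1699840*x^9*q^7 + 435200*x^9*q^6 + 35840*x^9*q^5 + 461824*x^8*q^10 + 2037760*x^8*q^9 + 3523584*x^8*q^8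 + 2985984*x^8*q^7 + 1227776*x^8*q^6 + 219136*x^8*q^5 + 13312*x^8*q^4 + 343552*x^7*q^10 + 1707008*x^7*q^9 + 3480576*x^7*q^8 + 3701248*x^7*q^7 + 2118144*x^7*q^6 + 609280*x^7*q^5 + 78848*x^7*q^4 + 3584*x^7*q^3 + 205568*x^6*q^10 + 1162752*x^6*q^9 + 2725632*x^6*q^8 + 3450880*x^6*q^7 + 2506624*x^6*q^6 + 1011200*x^6*q^5 + 207872*x^6*q^4 + 19456*x^6*q^3 + 640*x^6*q^2 + 99968*x^5*q^10 + 630528*x^5*q^9 + 1672448*x^5*q^8 + 2448128*x^5*q^7 + 2143296*x^5*q^6 + 1114944*x^5*q^5 + 321664*x^5*q^4 + 46720*x^5*q^3 + 3008*x^5*q^2 + 64*x^5*q + 37632*x^4*q^10 + 269760*x^4*q^9 + 801280*x^4*q^8 + 1330688*x^4*q^7 + 1351680*x^4*q^6 + 852864*x^4*q^5 + 318464*x^4*q^4 + 63488*x^4*q^3 + 5888*x^4*q^2 + 192*x^4*q + 9600*x^3*q^10 + 85952*x^3*q^9 + 291456*x^3*q^8 + 544768*x^3*q^7 + 630016*x^3*q^6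 + 465152*x^3*q^5 + 213888*x^3*q^4 + 55808*x^3*q^3 + 7040*x^3*q^2 + 320*x^3*q + 1728*x^2*q^10 + 19776*x^2*q^9 + 78080*x^2*q^8 + 164160*x^2*q^7 + 212832*x^2*q^6 + 179200*x^2*q^5 + 97344*x^2*q^4 + 31808*x^2*q^3 + 5280*x^2*q^2 + 320*x^2*q + 288*x*q^10 + 3360*x*q^9 + 14912*x*q^8 + 34784*x*q^7 + 49424*x*q^6 + 46256*x*q^5 + 29088*x*q^4 + 11648*x*q^3 + 2544*x*q^2 + 208*x*q + 144*q^9 + 1176*q^8 + 3632*q^7 + 5992*q^6 + 6208*q^5 + 4456*q^4 + 2224*q^3 + 664*q^2 + 80*q) := by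
      obtain ⟨a, rfl⟩ : ∃ a : ℝ, x = a^2 := ⟨Real.sqrt x, (Real.sq_sqrt hx).symm⟩
      obtain ⟨b, rfl⟩ : ∃ b : ℝ, q = b^2 := ⟨Real.sqrt q, (Real.sq_sqrt hq.le).symm⟩
      positivity
    linarith [mul_nonneg hx hPnn, hpos1, hkey]
end

section
/- For n ≥ 3 and 0 ≤ i ≤ 2n−1, the refined q-Eulerian polynomials of type D satisfy the recurrence T_{n,i}(x;q) = q^{χ(i≥n)} ( x·Σ_{j=0}^{⌈(n−1)i/n⌉−1} T_{n−1,j}(x;q) + Σ_{j=⌈(n−1)i/n⌉}^{2n−3} T_{n−1,j}(x;q) ). In particular T_{n,0}(x;q) = T_{n−1}(x;q). -/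
open Polynomial

/-- the finite set of type `D` inversion sequences: `e : Fin n → ℕ` with
`e i < 2(i+1)`. -/
def invSeqs (n : ℕ) : Finset (Fin n → ℕ) :=
  ((Finset.univ : Finset (Fin n → Fin (2 * n + 1))).image
      (fun e => fun i => (e i : ℕ))).filter
    (fun e => ∀ i : Fin n, e i < 2 * ((i : ℕ) + 1))

/-- value of an inversion sequence at (0-indexed) position `i`. -/
def ev {n : ℕ} (e : Fin n → ℕ) (i : ℕ) : ℕ :=
  if h : i < n then e ⟨i, h⟩ else 0

/-- the type `D` ascent statistic:
`asc_D e = χ(e₁ + e₂/2 ≥ 3/2) + #{i ∈ [n-1] : eᵢ/i < eᵢ₊₁/(i+1)}`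
(1-indexed). -/
noncomputable def ascD {n : ℕ} (e : Fin n → ℕ) : ℕ :=
  (if 3 ≤ 2 * ev e 0 + ev e 1 then 1 else 0) +
    ((Finset.Ico 1 n).filter
      (fun i => (i + 1) * ev e (i - 1) < i * ev e i)).card

/-- `exc e = #{i : eᵢ ≥ i}` (1-indexed). -/
noncomputable def excD {n : ℕ} (e : Fin n → ℕ) : ℕ :=
  ((Finset.range n).filter (fun j => j + 1 ≤ ev e j)).card

/-- the affine type `D` ascent statistic:
`ãsc_D e = asc_D e + χ(e_{n-1}/(n-1) + e_n/n < (2n-1)/n)`. -/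
noncomputable def affAscD {n : ℕ} (e : Fin n → ℕ) : ℕ :=
  ascD e +
    (if n * ev e (n - 2) + (n - 1) * ev e (n - 1) < (n - 1) * (2 * n - 1)
      then 1 else 0)

/-- the refined Eulerian polynomial `T_{n,i}(x)` of type `D`. -/
noncomputable def TD (n i : ℕ) : Polynomial ℝ :=
  ∑ e ∈ (invSeqs n).filter (fun e => ev e (n - 1) = i), X ^ ascD e

/-- the refined `q`-Eulerian polynomial `T_{n,i}(x;q)` of type `D`. -/
noncomputable def TqD (n i : ℕ) (q : ℝ) : Polynomial ℝ :=
  ∑ e ∈ (invSeqs n).filter (fun e => ev e (n - 1) = i),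
    C q ^ excD e * X ^ ascD e

/-- the refined affine Eulerian polynomial `T̃_{n,i}(x)` of type `D`. -/
noncomputable def TtD (n i : ℕ) : Polynomial ℝ :=
  ∑ e ∈ (invSeqs n).filter (fun e => ev e (n - 1) = i), X ^ affAscD e

/-!
Deleting the last entry `eₙ = i` is a bijection from the type `D` inversion sequences of
length `n` ending in `i` onto those of length `n - 1`. It removes one excedance exactly when
`i ≥ n`, and one ascent exactly when `eₙ₋₁/(n-1) < i/n`, i.e. when
`eₙ₋₁ < ⌈(n-1)i/n⌉`; the first two entries, which alone determine the extra ascent at `0`,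
are untouched because `n ≥ 3`.
-/

lemma mem_invSeqs {n : ℕ} {e : Fin n → ℕ} :
    e ∈ invSeqs n ↔ ∀ i : Fin n, e i < 2 * ((i : ℕ) + 1) := by
  simp only [invSeqs, Finset.mem_filter, Finset.mem_image, Finset.mem_univ, true_and,
    and_iff_right_iff_imp]
  intro h
  exact ⟨fun i => ⟨e i, by have := h i; omega⟩, rfl⟩

lemma ev_lt_of_mem_invSeqs {n j : ℕ} {e : Fin n → ℕ} (he : e ∈ invSeqs n) (hj : j < n) :
    ev e j < 2 * (j + 1) := by
  simpa [ev, hj] using mem_invSeqs.1 he ⟨j, hj⟩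

lemma mem_invSeqs_succ {m : ℕ} {e : Fin (m + 1) → ℕ} :
    e ∈ invSeqs (m + 1) ↔ Fin.init e ∈ invSeqs m ∧ e (Fin.last m) < 2 * (m + 1) := by
  simp only [mem_invSeqs, Fin.forall_fin_succ', Fin.init, Fin.val_castSucc, Fin.val_last]

section Snoc

variable {m j : ℕ} (e : Fin m → ℕ) (i : ℕ)

lemma ev_snoc_of_lt (hj : j < m) : ev (Fin.snoc e i : Fin (m + 1) → ℕ) j = ev e j := by
  simp [ev, hj, hj.trans m.lt_succ_self, Fin.snoc]

lemma ev_snoc_self : ev (Fin.snoc e i : Fin (m + 1) → ℕ) m = i := by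
  simp [ev, Fin.snoc]

lemma excD_snoc :
    excD (Fin.snoc e i : Fin (m + 1) → ℕ) = excD e + if m + 1 ≤ i then 1 else 0 := by
  simp only [excD, Finset.card_filter, Finset.sum_range_succ, ev_snoc_self]
  congr 1
  exact Finset.sum_congr rfl fun j hj => by rw [ev_snoc_of_lt _ _ (Finset.mem_range.1 hj)]

lemma ascD_snoc (hm : 2 ≤ m) :
    ascD (Fin.snoc e i : Fin (m + 1) → ℕ) =
      ascD e + if (m + 1) * ev e (m - 1) < m * i then 1 else 0 := by
  simp only [ascD, Finset.card_filter, Finset.sum_Ico_succ_top (by omega : 1 ≤ m),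
    ev_snoc_self, ev_snoc_of_lt e i (by omega : 0 < m), ev_snoc_of_lt e i (by omega : 1 < m),
    ev_snoc_of_lt e i (by omega : m - 1 < m), add_assoc]
  congr 2
  exact Finset.sum_congr rfl fun j hj => by
    rw [Finset.mem_Ico] at hj
    rw [ev_snoc_of_lt _ _ (by omega : j - 1 < m), ev_snoc_of_lt _ _ hj.2]

end Snoc

lemma sum_invSeqs_succ_filter_ev_eq_sum_snoc {M : Type*} [AddCommMonoid M] {m i : ℕ}
    (hi : i < 2 * (m + 1)) (F : (Fin (m + 1) → ℕ) → M) :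
    ∑ e ∈ (invSeqs (m + 1)).filter (fun e => ev e m = i), F e =
      ∑ e ∈ invSeqs m, F (Fin.snoc e i) := by
  have ev_last (e : Fin (m + 1) → ℕ) : ev e m = e (Fin.last m) := by simp [ev, Fin.last]
  refine Finset.sum_nbij' Fin.init (fun e => Fin.snoc e i) ?_ ?_ ?_ ?_ ?_
  · intro e he
    exact (mem_invSeqs_succ.1 (Finset.mem_filter.1 he).1).1
  · intro e he
    simpa [mem_invSeqs_succ, ev_last, hi] using he
  · intro e he
    obtain ⟨-, rfl⟩ := Finset.mem_filter.1 he
    rw [ev_last, Fin.snoc_init_self]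
  · intro e _
    exact Fin.init_snoc _ _
  · intro e he
    obtain ⟨-, rfl⟩ := Finset.mem_filter.1 he
    rw [ev_last, Fin.snoc_init_self]

lemma sum_invSeqs_eq_sum_range_mul_TqD {n : ℕ} (hn : 0 < n) (f : ℕ → Polynomial ℝ) (q : ℝ) :
    ∑ e ∈ invSeqs n, f (ev e (n - 1)) * (C q ^ excD e * X ^ ascD e) =
      ∑ j ∈ Finset.range (2 * n), f j * TqD n j q := by
  have hmaps : ∀ e ∈ invSeqs n, ev e (n - 1) ∈ Finset.range (2 * n) := fun e he => by
    have := ev_lt_of_mem_invSeqs he (by omega : n - 1 < n)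
    rw [Finset.mem_range]
    omega
  rw [← Finset.sum_fiberwise_of_maps_to hmaps]
  refine Finset.sum_congr rfl fun j _ => ?_
  rw [TqD, Finset.mul_sum]
  exact Finset.sum_congr rfl fun e he => by rw [(Finset.mem_filter.1 he).2]

lemma TqD_succ {m i : ℕ} (hm : 2 ≤ m) (hi : i < 2 * (m + 1)) (q : ℝ) :
    TqD (m + 1) i q = C q ^ (if m + 1 ≤ i then 1 else 0) *
      ∑ j ∈ Finset.range (2 * m),
        (if (m + 1) * j < m * i then X else 1) * TqD m j q := by
  rw [← sum_invSeqs_eq_sum_range_mul_TqD (by omega), Finset.mul_sum, TqD,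
    Nat.add_sub_cancel, sum_invSeqs_succ_filter_ev_eq_sum_snoc hi]
  refine Finset.sum_congr rfl fun e _ => ?_
  rw [excD_snoc, ascD_snoc e i hm, pow_add, pow_add]
  split_ifs <;> ring

lemma Nat.lt_ceilDiv_iff_mul_lt {a b c : ℕ} (hc : 0 < c) : a < b ⌈/⌉ c ↔ c * a < b := by
  simpa only [not_le] using (ceilDiv_le_iff_le_mul hc).not

lemma sum_range_ite_lt_mul {R : Type*} [Semiring R] (g : ℕ → R) (x : R) {c N : ℕ}
    (hc : c ≤ N) :
    ∑ j ∈ Finset.range N, (if j < c then x else 1) * g j =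
      x * ∑ j ∈ Finset.range c, g j + ∑ j ∈ Finset.Ico c N, g j := by
  rw [← Finset.sum_range_add_sum_Ico _ hc, Finset.mul_sum]
  congr 1
  · exact Finset.sum_congr rfl fun j hj => by rw [if_pos (Finset.mem_range.1 hj)]
  · exact Finset.sum_congr rfl fun j hj => by
      rw [if_neg (Finset.mem_Ico.1 hj).1.not_gt, one_mul]

/-- Recurrence for the refined `q`-Eulerian polynomials of type `D`; in
particular `T_{n,0}(x;q) = T_{n-1}(x;q)`. -/
theorem Tq_recurrence (n i : ℕ) (hn : 3 ≤ n) (hi : i ≤ 2 * n - 1) (q : ℝ) :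
    TqD n i q = C q ^ (if n ≤ i then 1 else 0) *
      (X * ∑ j ∈ Finset.range (((n - 1) * i + n - 1) / n), TqD (n - 1) j q +
        ∑ j ∈ Finset.Icc (((n - 1) * i + n - 1) / n) (2 * n - 3),
          TqD (n - 1) j q) ∧
    TqD n 0 q = ∑ j ∈ Finset.range (2 * (n - 1)), TqD (n - 1) j q := by
  obtain ⟨m, rfl⟩ : ∃ m, n = m + 1 := ⟨n - 1, by omega⟩
  have hm : 2 ≤ m := by omega
  rw [Nat.add_sub_cancel]
  refine ⟨?_, ?_⟩
  · have hceil : m * i ⌈/⌉ (m + 1) ≤ 2 * m :=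
      (ceilDiv_le_iff_le_mul (by omega)).2 (by nlinarith [show i ≤ 2 * m + 1 by omega])
    have hIcc : Finset.Icc (m * i ⌈/⌉ (m + 1)) (2 * (m + 1) - 3) =
        Finset.Ico (m * i ⌈/⌉ (m + 1)) (2 * m) := by
      ext; simp only [Finset.mem_Icc, Finset.mem_Ico]; omega
    rw [TqD_succ hm (by omega), ← Nat.ceilDiv_eq_add_pred_div, hIcc,
      ← sum_range_ite_lt_mul _ _ hceil]
    simp only [Nat.lt_ceilDiv_iff_mul_lt (by omega : 0 < m + 1)]
  · simp [TqD_succ hm (by omega : 0 < 2 * (m + 1))]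
end

section
/- The eight polynomials K_{4,0} = 12x³+50x²+32x+2, K_{4,1} = 18x³+52x²+26x, K_{4,2} = 26x³+52x²+18x, K_{4,3} = K_{4,4} = 2x⁴+32x³+50x²+12x, K_{4,5} = 4x⁴+38x³+48x²+6x, K_{4,6} = 6x⁴+48x³+38x²+4x, K_{4,7} = 12x⁴+50x³+32x²+2x form a mutually interlacing sequence of real-rooted polynomials. -/
open Polynomial

/-! Every zero of each `K_{4,i}` is isolated by a sign change of the polynomial on an explicit
interval (a degenerate interval `[0, 0]` for the zero at the origin), and `K_{4,7} = x K_{4,0}`.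
Write the zeros of `K_{4,i}` in decreasing order as row `i` of a table `r`. Mutual interlacing then
only needs each column to increase, `r i k ≤ r (i + 1) k`, and the first row to dominate the shifted
last row, `r 7 (k + 1) ≤ r 0 k`: for `i < j` these chain to `r i k ≤ r j k` and
`r j (k + 1) ≤ r 7 (k + 1) ≤ r 0 k ≤ r i k`. -/

open Set

theorem Polynomial.roots_eq_of_forall_isRoot {R : Type*} [CommRing R] [IsDomain R] {f : R[X]}
    {l : List R} (hdeg : f.natDegree = l.length) (hl : l.Nodup) (hroot : ∀ x ∈ l, f.IsRoot x) :
    f.roots = l := by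
  rcases eq_or_ne f 0 with rfl | hf
  · simp [List.eq_nil_of_length_eq_zero hdeg.symm]
  refine (Multiset.eq_of_le_of_card_le ?_ ?_).symm
  · exact (Multiset.le_iff_subset (Multiset.coe_nodup.2 hl)).2
      fun x hx => (mem_roots hf).2 (hroot x hx)
  · simpa [← hdeg] using f.card_roots'

theorem Polynomial.roots_X_mul {R : Type*} [CommRing R] [IsDomain R] {f : R[X]} (hf : f ≠ 0) :
    (X * f).roots = 0 ::ₘ f.roots := by
  rw [roots_mul (mul_ne_zero X_ne_zero hf), roots_X, Multiset.singleton_add]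

theorem Polynomial.exists_isRoot_mem_Icc {f : ℝ[X]} {a b : ℝ} (hab : a ≤ b)
    (h : f.eval a * f.eval b ≤ 0) : ∃ x ∈ Icc a b, f.IsRoot x := by
  rcases mul_nonpos_iff.1 h with ⟨ha, hb⟩ | ⟨ha, hb⟩
  · exact intermediate_value_Icc' hab f.continuous.continuousOn ⟨hb, ha⟩
  · exact intermediate_value_Icc hab f.continuous.continuousOn ⟨ha, hb⟩

theorem Polynomial.exists_roots_eq_of_sign_changes {f : ℝ[X]} {B : List (ℝ × ℝ)}
    (hdeg : f.natDegree = B.length) (hB : B.Pairwise fun b c => c.2 < b.1)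
    (hsign : ∀ b ∈ B, b.1 ≤ b.2 ∧ f.eval b.1 * f.eval b.2 ≤ 0) :
    ∃ l : List ℝ, f.roots = l ∧ List.Forall₂ (fun x b => x ∈ Icc b.1 b.2) l B := by
  choose! r hr hroot using fun b hb => exists_isRoot_mem_Icc (hsign b hb).1 (hsign b hb).2
  refine ⟨B.map r, roots_eq_of_forall_isRoot (by simpa) ?_ ?_, ?_⟩
  · exact List.pairwise_map.2 <| hB.imp_of_mem fun hb hc hcb =>
      (((hr _ hc).2.trans_lt hcb).trans_le (hr _ hb).1).ne'
  · simpa only [List.forall_mem_map] using hroot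
  · exact List.forall₂_map_left_iff.2 (List.forall₂_same.2 hr)

theorem List.pair_getElem_mem_zip {α β : Type*} {l : List α} {l' : List β} {k : ℕ}
    (h : k < l.length) (h' : k < l'.length) : (l[k], l'[k]) ∈ l.zip l' := by
  rw [← List.getElem_zip (h := by simpa using ⟨h, h'⟩)]
  exact List.getElem_mem _

/-- Row `i` lists the zeros of the `i`-th polynomial of a family in decreasing order. -/
structure InterlacingTable {n : ℕ} (L : Fin (n + 1) → List ℝ) : Prop where
  length_mono : Monotone fun i => (L i).length
  length_last_le : (L (Fin.last n)).length ≤ (L 0).length + 1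
  le_succ : ∀ i : Fin n, ∀ x ∈ (L i.castSucc).zip (L i.succ), x.1 ≤ x.2
  last_tail_le : ∀ x ∈ (L (Fin.last n)).tail.zip (L 0), x.1 ≤ x.2

namespace InterlacingTable

variable {n : ℕ} {L : Fin (n + 1) → List ℝ}

theorem getElem_le_getElem (hL : InterlacingTable L) {i j : Fin (n + 1)} (hij : i ≤ j) {k : ℕ}
    (hi : k < (L i).length) (hj : k < (L j).length) : (L i)[k] ≤ (L j)[k] := by
  induction j using Fin.induction with
  | zero => obtain rfl := Fin.le_zero_iff.1 hij; rfl
  | succ m ih =>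
    rcases hij.eq_or_lt with rfl | hlt
    · rfl
    · have him : i ≤ m.castSucc := Fin.le_castSucc_iff.2 hlt
      have hm : k < (L m.castSucc).length := hi.trans_le (hL.length_mono him)
      exact (ih him hm).trans (hL.le_succ m _ (List.pair_getElem_mem_zip hm hj))

theorem getElem_succ_le_getElem (hL : InterlacingTable L) (i j : Fin (n + 1)) {k : ℕ}
    (hi : k < (L i).length) (hj : k + 1 < (L j).length) : (L j)[k + 1] ≤ (L i)[k] := by
  have hjl : (L j).length ≤ (L (Fin.last n)).length := hL.length_mono (Fin.le_last j)
  have hl : k + 1 < (L (Fin.last n)).length := hj.trans_le hjl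
  have h0 : k < (L 0).length := by have := hL.length_last_le; omega
  calc (L j)[k + 1] ≤ (L (Fin.last n))[k + 1] := hL.getElem_le_getElem (Fin.le_last j) hj hl
    _ ≤ (L 0)[k] := by
      have htail : k < (L (Fin.last n)).tail.length := by simpa [Nat.lt_sub_iff_add_lt] using hl
      rw [← List.getElem_tail htail]
      exact hL.last_tail_le _ (List.pair_getElem_mem_zip htail h0)
    _ ≤ (L i)[k] := hL.getElem_le_getElem (Fin.zero_le i) h0 hi

theorem pairwise_ge (hL : InterlacingTable L) (i : Fin (n + 1)) : (L i).Pairwise (· ≥ ·) :=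
  List.isChain_iff_pairwise.1 <| List.isChain_iff_getElem.2 fun _ hk =>
    hL.getElem_succ_le_getElem i i (by omega) hk

theorem interlaces (hL : InterlacingTable L) {p : Fin (n + 1) → ℝ[X]}
    (hlead : ∀ i, 0 < (p i).leadingCoeff) (hroots : ∀ i, (p i).roots = L i)
    (hdeg : ∀ i, (p i).natDegree = (L i).length) {i j : Fin (n + 1)} (hij : i ≤ j) :
    Interlaces (p i) (p j) := by
  have hlen : (L i).length ≤ (L j).length := hL.length_mono hij
  have hlast : (L j).length ≤ (L (Fin.last n)).length := hL.length_mono (Fin.le_last j)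
  have hfirst : (L 0).length ≤ (L i).length := hL.length_mono (Fin.zero_le i)
  have hlen' : (L j).length = (L i).length ∨ (L j).length = (L i).length + 1 := by
    have := hL.length_last_le; omega
  exact ⟨hlead j, hlead i, L j, L i, hL.pairwise_ge j, hL.pairwise_ge i, hroots j, hroots i,
    (hdeg j).symm, (hdeg i).symm, hlen', fun k hi hj => hL.getElem_le_getElem hij hi hj,
    fun k hj hi => hL.getElem_succ_le_getElem i j hi hj⟩

end InterlacingTable

noncomputable def K4 : Fin 8 → ℝ[X] := ![
  C 12 * X ^ 3 + C 50 * X ^ 2 + C 32 * X + C 2,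
  C 18 * X ^ 3 + C 52 * X ^ 2 + C 26 * X,
  C 26 * X ^ 3 + C 52 * X ^ 2 + C 18 * X,
  C 2 * X ^ 4 + C 32 * X ^ 3 + C 50 * X ^ 2 + C 12 * X,
  C 2 * X ^ 4 + C 32 * X ^ 3 + C 50 * X ^ 2 + C 12 * X,
  C 4 * X ^ 4 + C 38 * X ^ 3 + C 48 * X ^ 2 + C 6 * X,
  C 6 * X ^ 4 + C 48 * X ^ 3 + C 38 * X ^ 2 + C 4 * X,
  C 12 * X ^ 4 + C 50 * X ^ 3 + C 32 * X ^ 2 + C 2 * X]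

theorem K4_natDegree (i : Fin 8) : (K4 i).natDegree = if i < 3 then 3 else 4 := by
  fin_cases i <;>
    simp only [K4, Fin.isValue, Fin.reduceFinMk, Fin.zero_eta, Fin.mk_one, Matrix.cons_val,
      Matrix.cons_val_zero, Matrix.cons_val_one, Fin.reduceLT, lt_self_iff_false, ↓reduceIte] <;>
    compute_degree!

theorem K4_leadingCoeff_pos (i : Fin 8) : 0 < (K4 i).leadingCoeff := by
  rw [leadingCoeff, K4_natDegree]
  fin_cases i <;> simp [K4]

theorem K4_seven_eq : K4 7 = X * K4 0 := by
  simp only [K4, Fin.isValue, Matrix.cons_val, Matrix.cons_val_zero]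
  ring

theorem exists_roots_K4_zero : ∃ a b c : ℝ, (K4 0).roots = ↑[a, b, c] ∧
    a ∈ Icc (-0.1) (-0.05) ∧ b ∈ Icc (-0.72) (-0.67) ∧ c ∈ Icc (-5) (-3) := by
  obtain ⟨_, h, _ | ⟨ha, _ | ⟨hb, _ | ⟨hc, ⟨⟩⟩⟩⟩⟩ := exists_roots_eq_of_sign_changes (f := K4 0)
    (B := [(-0.1, -0.05), (-0.72, -0.67), (-5, -3)])
    (by simp [K4_natDegree]) (by norm_num) (by simp only [K4, Fin.isValue, Matrix.cons_val]; norm_num)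
  exact ⟨_, _, _, h, ha, hb, hc⟩

theorem exists_roots_K4_one : ∃ a b : ℝ, (K4 1).roots = ↑[0, a, b] ∧
    a ∈ Icc (-0.67) (-0.5) ∧ b ∈ Icc (-3) (-2) := by
  obtain ⟨_, h, _ | ⟨hz, _ | ⟨ha, _ | ⟨hb, ⟨⟩⟩⟩⟩⟩ := exists_roots_eq_of_sign_changes (f := K4 1)
    (B := [(0, 0), (-0.67, -0.5), (-3, -2)])
    (by simp [K4_natDegree]) (by norm_num) (by simp only [K4, Fin.isValue, Matrix.cons_val]; norm_num)
  rw [le_antisymm hz.2 hz.1] at h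
  exact ⟨_, _, h, ha, hb⟩

theorem exists_roots_K4_two : ∃ a b : ℝ, (K4 2).roots = ↑[0, a, b] ∧
    a ∈ Icc (-0.5) (-0.4) ∧ b ∈ Icc (-2) (-1.5) := by
  obtain ⟨_, h, _ | ⟨hz, _ | ⟨ha, _ | ⟨hb, ⟨⟩⟩⟩⟩⟩ := exists_roots_eq_of_sign_changes (f := K4 2)
    (B := [(0, 0), (-0.5, -0.4), (-2, -1.5)])
    (by simp [K4_natDegree]) (by norm_num) (by simp only [K4, Fin.isValue, Matrix.cons_val]; norm_num)
  rw [le_antisymm hz.2 hz.1] at h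
  exact ⟨_, _, h, ha, hb⟩

theorem exists_roots_K4_three : ∃ a b c : ℝ, (K4 3).roots = ↑[0, a, b, c] ∧
    a ∈ Icc (-0.4) (-0.2) ∧ b ∈ Icc (-1.5) (-1.4) ∧ c ∈ Icc (-15) (-10) := by
  obtain ⟨_, h, _ | ⟨hz, _ | ⟨ha, _ | ⟨hb, _ | ⟨hc, ⟨⟩⟩⟩⟩⟩⟩ := exists_roots_eq_of_sign_changes
    (f := K4 3) (B := [(0, 0), (-0.4, -0.2), (-1.5, -1.4), (-15, -10)])
    (by simp [K4_natDegree]) (by norm_num) (by simp only [K4, Fin.isValue, Matrix.cons_val]; norm_num)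
  rw [le_antisymm hz.2 hz.1] at h
  exact ⟨_, _, _, h, ha, hb, hc⟩

theorem exists_roots_K4_five : ∃ a b c : ℝ, (K4 5).roots = ↑[0, a, b, c] ∧
    a ∈ Icc (-0.2) (-0.13) ∧ b ∈ Icc (-1.4) (-1) ∧ c ∈ Icc (-10) (-7.5) := by
  obtain ⟨_, h, _ | ⟨hz, _ | ⟨ha, _ | ⟨hb, _ | ⟨hc, ⟨⟩⟩⟩⟩⟩⟩ := exists_roots_eq_of_sign_changes
    (f := K4 5) (B := [(0, 0), (-0.2, -0.13), (-1.4, -1), (-10, -7.5)])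
    (by simp [K4_natDegree]) (by norm_num) (by simp only [K4, Fin.isValue, Matrix.cons_val]; norm_num)
  rw [le_antisymm hz.2 hz.1] at h
  exact ⟨_, _, _, h, ha, hb, hc⟩

theorem exists_roots_K4_six : ∃ a b c : ℝ, (K4 6).roots = ↑[0, a, b, c] ∧
    a ∈ Icc (-0.13) (-0.1) ∧ b ∈ Icc (-1) (-0.72) ∧ c ∈ Icc (-7.5) (-5) := by
  obtain ⟨_, h, _ | ⟨hz, _ | ⟨ha, _ | ⟨hb, _ | ⟨hc, ⟨⟩⟩⟩⟩⟩⟩ := exists_roots_eq_of_sign_changes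
    (f := K4 6) (B := [(0, 0), (-0.13, -0.1), (-1, -0.72), (-7.5, -5)])
    (by simp [K4_natDegree]) (by norm_num) (by simp only [K4, Fin.isValue, Matrix.cons_val]; norm_num)
  rw [le_antisymm hz.2 hz.1] at h
  exact ⟨_, _, _, h, ha, hb, hc⟩

theorem exists_interlacingTable_K4 : ∃ L : Fin 8 → List ℝ, InterlacingTable L ∧
    (∀ i, (K4 i).roots = L i) ∧ ∀ i, (K4 i).natDegree = (L i).length := by
  obtain ⟨a0, b0, c0, h0, ha0, hb0, hc0⟩ := exists_roots_K4_zero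
  obtain ⟨a1, b1, h1, ha1, hb1⟩ := exists_roots_K4_one
  obtain ⟨a2, b2, h2, ha2, hb2⟩ := exists_roots_K4_two
  obtain ⟨a3, b3, c3, h3, ha3, hb3, hc3⟩ := exists_roots_K4_three
  obtain ⟨a5, b5, c5, h5, ha5, hb5, hc5⟩ := exists_roots_K4_five
  obtain ⟨a6, b6, c6, h6, ha6, hb6, hc6⟩ := exists_roots_K4_six
  have h7 : (K4 7).roots = ↑[0, a0, b0, c0] := by
    rw [K4_seven_eq, roots_X_mul (leadingCoeff_ne_zero.1 (K4_leadingCoeff_pos 0).ne'), h0]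
    rfl
  set L : Fin 8 → List ℝ := ![[a0, b0, c0], [0, a1, b1], [0, a2, b2], [0, a3, b3, c3],
    [0, a3, b3, c3], [0, a5, b5, c5], [0, a6, b6, c6], [0, a0, b0, c0]]
  refine ⟨L, ⟨Fin.monotone_iff_le_succ.2 fun i => ?_, by simp [L], fun i => ?_, by simp [L]⟩,
    fun i => ?_, fun i => ?_⟩
  · fin_cases i <;> simp [L]
  · simp only [mem_Icc] at *
    fin_cases i <;>
      simp only [L, Fin.isValue, Fin.reduceFinMk, Fin.zero_eta, Fin.mk_one, Fin.castSucc_zero,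
        Fin.castSucc_one, Fin.reduceCastSucc, Fin.succ_zero_eq_one, Fin.succ_one_eq_two,
        Fin.reduceSucc, Matrix.cons_val, Matrix.cons_val_zero, Matrix.cons_val_one,
        List.zip_cons_cons, List.zip_nil_left, List.zip_nil_right, List.mem_cons, List.not_mem_nil,
        or_false, forall_eq_or_imp, forall_eq] <;>
      and_intros <;> linarith
  · fin_cases i
    exacts [h0, h1, h2, h3, h3, h5, h6, h7]
  · fin_cases i <;> simp [K4_natDegree, L]

/-- The eight polynomials `K_{4,i}(x)` form a mutually interlacing sequence of
real-rooted polynomials. -/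
theorem K4_mutually_interlacing (K : Fin 8 → Polynomial ℝ)
    (hK : K = ![
      C 12 * X ^ 3 + C 50 * X ^ 2 + C 32 * X + C 2,
      C 18 * X ^ 3 + C 52 * X ^ 2 + C 26 * X,
      C 26 * X ^ 3 + C 52 * X ^ 2 + C 18 * X,
      C 2 * X ^ 4 + C 32 * X ^ 3 + C 50 * X ^ 2 + C 12 * X,
      C 2 * X ^ 4 + C 32 * X ^ 3 + C 50 * X ^ 2 + C 12 * X,
      C 4 * X ^ 4 + C 38 * X ^ 3 + C 48 * X ^ 2 + C 6 * X,
      C 6 * X ^ 4 + C 48 * X ^ 3 + C 38 * X ^ 2 + C 4 * X,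
      C 12 * X ^ 4 + C 50 * X ^ 3 + C 32 * X ^ 2 + C 2 * X]) :
    (∀ i : Fin 8, AllRealRoots (K i)) ∧
    (∀ i j : Fin 8, i < j → Interlaces (K i) (K j)) := by
  obtain rfl : K = K4 := hK
  obtain ⟨L, hL, hroots, hdeg⟩ := exists_interlacingTable_K4
  exact ⟨fun i => by rw [AllRealRoots, hroots, hdeg]; rfl,
    fun i j hij => hL.interlaces K4_leadingCoeff_pos hroots hdeg hij.le⟩
end
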